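/- Let f : 𝕆 → 𝕆 be left para-linear and suppose x ∈ 𝕆 lies in the nucleus of 𝕆 (i.e. [p,q,x] = 0 for all p,q ∈ 𝕆, so x is real). Then f(px) = p·f(x) for all p ∈ 𝕆. -/

import Mathlib

noncomputable section

open Quaternion

/-- The octonions, as the Cayley–Dickson double of the quaternions. -/
def Octo : Type := ℍ × ℍ

namespace Octo

instance : AddCommGroup Octo := inferInstanceAs (AddCommGroup (ℍ × ℍ))
instance : Module ℝ Octo := inferInstanceAs (Module ℝ (ℍ × ℍ))

/-- Cayley–Dickson multiplication: (a,b)(c,d) = (ac − d̄b, da + bc̄). -/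
instance : Mul Octo :=
  ⟨fun x y => ((x.1 * y.1 - star y.2 * x.2, y.2 * x.1 + x.2 * star y.1) : ℍ × ℍ)⟩

/-- Octonionic conjugation. -/
def conj (x : Octo) : Octo := ((star x.1, -x.2) : ℍ × ℍ)

/-- Real part. -/
def re (x : Octo) : ℝ := x.1.re

/-- Squared norm. -/
def normSq (x : Octo) : ℝ := re (x * conj x)

/-- The standard basis e₀ = 1, e₁, …, e₇. -/
def e : Fin 8 → Octo :=
  ![((1, 0) : ℍ × ℍ), ((⟨0,1,0,0⟩, 0) : ℍ × ℍ), ((⟨0,0,1,0⟩, 0) : ℍ × ℍ),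
    ((⟨0,0,0,1⟩, 0) : ℍ × ℍ), ((0, 1) : ℍ × ℍ), ((0, ⟨0,1,0,0⟩) : ℍ × ℍ),
    ((0, ⟨0,0,1,0⟩) : ℍ × ℍ), ((0, ⟨0,0,0,1⟩) : ℍ × ℍ)]

/-- Inverse: p⁻¹ = conj p / |p|². -/
def inv (x : Octo) : Octo := (normSq x)⁻¹ • conj x

/-- The associator [a,b,c] = (ab)c − a(bc). -/
def assoc (a b c : Octo) : Octo := a * b * c - a * (b * c)

/-- Left para-linear map: ℝ-linear with Re(f(px) − p f(x)) = 0. -/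
def IsParaLinear (f : Octo → Octo) : Prop :=
  IsLinearMap ℝ f ∧ ∀ p x : Octo, re (f (p * x) - p * f x) = 0

end Octo

/-!
The trace form `re (x * y)` is associative and nondegenerate, so for a para-linear `f`
the element `f p - p * f 1` pairs to zero with every `q`: both `re (q * f p)` and
`re (q * (p * f 1)) = re ((q * p) * f 1)` equal `re (f (q * p))`. Hence `f p = p * f 1`, and
the claim becomes `(p * x) * f 1 = p * (x * f 1)`. The octonions are right alternative, so the
associator is antisymmetric in its last two slots and `[p, x, c] = -[p, c, x] = 0`.
-/
namespace Octo

instance : One Octo := ⟨((1, 0) : ℍ × ℍ)⟩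

@[ext] lemma ext {x y : Octo} (h₁ : x.1 = y.1) (h₂ : x.2 = y.2) : x = y := Prod.ext h₁ h₂

@[simp] lemma fst_zero : (0 : Octo).1 = 0 := rfl
@[simp] lemma snd_zero : (0 : Octo).2 = 0 := rfl
@[simp] lemma fst_one : (1 : Octo).1 = 1 := rfl
@[simp] lemma snd_one : (1 : Octo).2 = 0 := rfl
@[simp] lemma fst_add (x y : Octo) : (x + y).1 = x.1 + y.1 := rfl
@[simp] lemma snd_add (x y : Octo) : (x + y).2 = x.2 + y.2 := rfl
@[simp] lemma fst_sub (x y : Octo) : (x - y).1 = x.1 - y.1 := rfl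
@[simp] lemma snd_sub (x y : Octo) : (x - y).2 = x.2 - y.2 := rfl
@[simp] lemma fst_mul (x y : Octo) : (x * y).1 = x.1 * y.1 - star y.2 * x.2 := rfl
@[simp] lemma snd_mul (x y : Octo) : (x * y).2 = y.2 * x.1 + x.2 * star y.1 := rfl
@[simp] lemma fst_conj (x : Octo) : (conj x).1 = star x.1 := rfl
@[simp] lemma snd_conj (x : Octo) : (conj x).2 = -x.2 := rfl

lemma re_sub (x y : Octo) : re (x - y) = re x - re y := rfl

lemma mul_add (x y z : Octo) : x * (y + z) = x * y + x * z := by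
  ext <;> simp only [fst_mul, snd_mul, fst_add, snd_add, star_add] <;> noncomm_ring

lemma add_mul (x y z : Octo) : (x + y) * z = x * z + y * z := by
  ext <;> simp only [fst_mul, snd_mul, fst_add, snd_add] <;> noncomm_ring

lemma mul_sub (x y z : Octo) : x * (y - z) = x * y - x * z := by
  ext <;> simp only [fst_mul, snd_mul, fst_sub, snd_sub, star_sub] <;> noncomm_ring

lemma mul_one (x : Octo) : x * 1 = x := by ext <;> simp

lemma re_conj_mul_self (x : Octo) :
    re (conj x * x) = Quaternion.normSq x.1 + Quaternion.normSq x.2 := by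
  simp [re, Quaternion.normSq_def']
  ring

lemma eq_zero_of_forall_re_mul_eq_zero {x : Octo} (h : ∀ q, re (q * x) = 0) : x = 0 := by
  have hx := re_conj_mul_self x
  rw [h, eq_comm, add_eq_zero_iff_of_nonneg normSq_nonneg normSq_nonneg,
    Quaternion.normSq_eq_zero, Quaternion.normSq_eq_zero] at hx
  exact ext hx.1 hx.2

lemma re_mul_mul_assoc (x y z : Octo) : re (x * y * z) = re (x * (y * z)) := by
  simp [re]
  ring

set_option maxHeartbeats 1000000 in
lemma assoc_self_right (a b : Octo) : assoc a b b = 0 := by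
  ext <;> simp [assoc] <;> ring

lemma assoc_swap (a b c : Octo) : assoc a b c = -assoc a c b :=
  calc assoc a b c = assoc a (b + c) (b + c) - assoc a b b - assoc a c c - assoc a c b := by
        simp only [assoc, mul_add, add_mul]; abel
    _ = -assoc a c b := by simp [assoc_self_right]

lemma IsParaLinear.map_eq_mul_map_one {f : Octo → Octo} (hf : IsParaLinear f) (p : Octo) :
    f p = p * f 1 := by
  rw [← sub_eq_zero]
  refine eq_zero_of_forall_re_mul_eq_zero fun q => ?_
  have hp := hf.2 q p
  have hqp := hf.2 (q * p) 1
  rw [re_sub] at hp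
  rw [re_sub, mul_one] at hqp
  rw [mul_sub, re_sub, ← re_mul_mul_assoc]
  linarith

end Octo

theorem stmt19 (f : Octo → Octo) (hf : Octo.IsParaLinear f) (x : Octo)
    (hx : ∀ p q : Octo, Octo.assoc p q x = 0) :
    ∀ p : Octo, f (p * x) = p * f x := by
  intro p
  have hpx : Octo.assoc p x (f 1) = 0 := by rw [Octo.assoc_swap, hx, neg_zero]
  calc f (p * x) = p * x * f 1 := hf.map_eq_mul_map_one _
    _ = p * (x * f 1) := sub_eq_zero.1 hpx
    _ = p * f x := by rw [← hf.map_eq_mul_map_one]
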